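/- Let E = EuclideanSpace ℝ (Fin 3), and let C > 0, b > 0, α ≥ 0 be real numbers. Let D : E × E → ℝ be continuously differentiable, with partial gradients ∇_r D and ∇_v D. Fix a time t ∈ ℝ and suppose r(t), v(t) ∈ E with v(t) ≠ 0, m(t) > 0, p_r(t), p_v(t) ∈ E with p_v(t) ≠ 0, p_m(t) ∈ ℝ, where m, p_v, p_m are functions differentiable at t satisfying at t: m'(t) = −b·‖u(t)‖ with u(t) = α • (‖p_v(t)‖⁻¹ • p_v(t)); p_v'(t) = −p_r(t) + (1/m(t))·(⟪p_v(t),v(t)⟫/‖v(t)‖)·∇_v D(r(t),v(t)) + (D(r(t),v(t))/m(t))·p_v(t)/‖v(t)‖ − (D(r(t),v(t))/m(t))·⟪p_v(t),v(t)⟫·v(t)/‖v(t)‖³; and p_m'(t) = (1/m(t))·⟪p_v(t), −(D(r(t),v(t))/m(t))·v(t)/‖v(t)‖ + (C/m(t))·u(t)⟫. Then the switching function Ψ(s) = (C/m(s))·‖p_v(s)‖ − b·p_m(s) is differentiable at t with Ψ'(t) = (b·D(r(t),v(t))/(m(t)²·‖v(t)‖))·⟪p_v(t),v(t)⟫ +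 (C/(m(t)·‖p_v(t)‖))·( −⟪p_v(t), p_r(t)⟫ + (⟪p_v(t),v(t)⟫/(m(t)·‖v(t)‖))·⟪∇_v D(r(t),v(t)), p_v(t)⟫ + (D(r(t),v(t))/m(t))·‖p_v(t)‖²/‖v(t)‖ − (D(r(t),v(t))/m(t))·⟪p_v(t),v(t)⟫²/‖v(t)‖³ ). In particular, Ψ'(t) does not depend on α. -/

import Mathlib

/-!
Differentiate `Ψ = (C / m) ‖p_v‖ - b p_m` by the product, quotient and chain rules, using
`‖p_v‖' = ⟪p_v, p_v'⟫ / ‖p_v‖`. The control enters `Ψ'` only through `m'` and `p_m'`, and together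
these contribute `(b C / m²) (‖p_v‖ ‖u‖ - ⟪p_v, u⟫)`, which vanishes because `u` is a nonnegative
multiple of `p_v`. Expanding `⟪p_v, p_v'⟫` with the adjoint equation gives the stated formula.
-/

local notation "E3" => EuclideanSpace ℝ (Fin 3)

open scoped RealInnerProductSpace

section

variable {F : Type*} [NormedAddCommGroup F] [InnerProductSpace ℝ F]

theorem HasDerivAt.norm {f : ℝ → F} {f' : F} {x : ℝ} (hf : HasDerivAt f f' x) (hx : f x ≠ 0) :
    HasDerivAt (fun s => ‖f s‖) (⟪f x, f'⟫ / ‖f x‖) x := by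
  have hsqrt := hf.norm_sq.sqrt (by positivity)
  simp only [Real.sqrt_sq (norm_nonneg _)] at hsqrt
  convert hsqrt using 1
  field_simp

theorem hasDerivAt_div_mul_norm_sub_mul (C b : ℝ) {m p_m : ℝ → ℝ} {p : ℝ → F}
    {m' p_m' : ℝ} {p' : F} {t : ℝ} (hm : HasDerivAt m m' t) (hp : HasDerivAt p p' t)
    (hpm : HasDerivAt p_m p_m' t) (hmt : m t ≠ 0) (hpt : p t ≠ 0) :
    HasDerivAt (fun s => C / m s * ‖p s‖ - b * p_m s)
      (-(C * m') / m t ^ 2 * ‖p t‖ + C / m t * (⟪p t, p'⟫ / ‖p t‖) - b * p_m') t := by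
  refine ((((hasDerivAt_const t C).fun_div hm hmt).mul (hp.norm hpt)).sub
    (hpm.const_mul b)).congr_deriv ?_
  ring

theorem norm_smul_inv_norm_smul {α : ℝ} (hα : 0 ≤ α) {p : F} (hp : p ≠ 0) :
    ‖α • (‖p‖⁻¹ • p)‖ = α := by
  rw [norm_smul, norm_smul, norm_inv, norm_norm, inv_mul_cancel₀ (norm_ne_zero_iff.mpr hp),
    Real.norm_of_nonneg hα, mul_one]

theorem inner_smul_inv_norm_smul (α : ℝ) (p : F) : ⟪p, α • (‖p‖⁻¹ • p)⟫ = α * ‖p‖ := by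
  rw [real_inner_smul_right, real_inner_smul_right, real_inner_self_eq_norm_sq]
  by_cases hp : ‖p‖ = 0
  · simp [hp]
  · field_simp

end

theorem switching_function_deriv_singular_general
    (C b α : ℝ) (hα : 0 ≤ α)
    (D : E3 × E3 → ℝ)
    (t : ℝ) (rt vt prt : E3) (hvt : vt ≠ 0)
    (m p_m : ℝ → ℝ) (p_v : ℝ → E3)
    (hmt : 0 < m t) (hpvt : p_v t ≠ 0)
    (u : ℝ → E3) (hu : u t = α • (‖p_v t‖⁻¹ • p_v t))
    (hm' : HasDerivAt m (-(b * ‖u t‖)) t)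
    (hpv' : HasDerivAt p_v
      (-prt
        + (1 / m t * ((inner ℝ (p_v t) vt : ℝ) / ‖vt‖)) •
            gradient (fun y => D (rt, y)) vt
        + (D (rt, vt) / m t / ‖vt‖) • p_v t
        - (D (rt, vt) / m t * (inner ℝ (p_v t) vt : ℝ) / ‖vt‖ ^ 3) • vt) t)
    (hpm' : HasDerivAt p_m
      (1 / m t *
        (inner ℝ (p_v t)
          (-(D (rt, vt) / m t / ‖vt‖) • vt + (C / m t) • u t) : ℝ)) t) :
    HasDerivAt (fun s => C / m s * ‖p_v s‖ - b * p_m s)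
      (b * D (rt, vt) / (m t ^ 2 * ‖vt‖) * (inner ℝ (p_v t) vt : ℝ)
        + C / (m t * ‖p_v t‖) *
          (-(inner ℝ (p_v t) prt : ℝ)
            + (inner ℝ (p_v t) vt : ℝ) / (m t * ‖vt‖) *
                (inner ℝ (gradient (fun y => D (rt, y)) vt) (p_v t) : ℝ)
            + D (rt, vt) / m t * ‖p_v t‖ ^ 2 / ‖vt‖
            - D (rt, vt) / m t * (inner ℝ (p_v t) vt : ℝ) ^ 2 / ‖vt‖ ^ 3)) t := by
  convert hasDerivAt_div_mul_norm_sub_mul C b hm' hpv' hpm' hmt.ne' hpvt using 1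
  have hvn : ‖vt‖ ≠ 0 := norm_ne_zero_iff.mpr hvt
  have hpn : ‖p_v t‖ ≠ 0 := norm_ne_zero_iff.mpr hpvt
  have hu_norm : ‖u t‖ = α := hu ▸ norm_smul_inv_norm_smul hα hpvt
  have hu_inner : ⟪p_v t, u t⟫ = α * ‖p_v t‖ := hu ▸ inner_smul_inv_norm_smul α (p_v t)
  simp only [hu_norm, inner_add_right, inner_sub_right, inner_neg_right, real_inner_smul_right,
    real_inner_self_eq_norm_sq, hu_inner, real_inner_comm (p_v t)]
  field_simp
  ring

theorem switching_function_deriv_singular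
    (C b α : ℝ) (hC : 0 < C) (hb : 0 < b) (hα : 0 ≤ α)
    (D : E3 × E3 → ℝ) (hD : ContDiff ℝ 1 D)
    (t : ℝ) (rt vt prt : E3) (hvt : vt ≠ 0)
    (m p_m : ℝ → ℝ) (p_v : ℝ → E3)
    (hmt : 0 < m t) (hpvt : p_v t ≠ 0)
    (u : ℝ → E3) (hu : u t = α • (‖p_v t‖⁻¹ • p_v t))
    (hm' : HasDerivAt m (-(b * ‖u t‖)) t)
    (hpv' : HasDerivAt p_v
      (-prt
        + (1 / m t * ((inner ℝ (p_v t) vt : ℝ) / ‖vt‖)) •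
            gradient (fun y => D (rt, y)) vt
        + (D (rt, vt) / m t / ‖vt‖) • p_v t
        - (D (rt, vt) / m t * (inner ℝ (p_v t) vt : ℝ) / ‖vt‖ ^ 3) • vt) t)
    (hpm' : HasDerivAt p_m
      (1 / m t *
        (inner ℝ (p_v t)
          (-(D (rt, vt) / m t / ‖vt‖) • vt + (C / m t) • u t) : ℝ)) t) :
    HasDerivAt (fun s => C / m s * ‖p_v s‖ - b * p_m s)
      (b * D (rt, vt) / (m t ^ 2 * ‖vt‖) * (inner ℝ (p_v t) vt : ℝ)
        + C / (m t * ‖p_v t‖) *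
          (-(inner ℝ (p_v t) prt : ℝ)
            + (inner ℝ (p_v t) vt : ℝ) / (m t * ‖vt‖) *
                (inner ℝ (gradient (fun y => D (rt, y)) vt) (p_v t) : ℝ)
            + D (rt, vt) / m t * ‖p_v t‖ ^ 2 / ‖vt‖
            - D (rt, vt) / m t * (inner ℝ (p_v t) vt : ℝ) ^ 2 / ‖vt‖ ^ 3)) t :=
  switching_function_deriv_singular_general C b α hα D t rt vt prt hvt m p_m p_v hmt hpvt u hu hm'
    hpv' hpm'
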